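/- (From the CMC linear system to the Dirac equation.) Let u : ℂ → ℝ be smooth, λ ∈ ℂ \ {0}, and let φ = (φ₁, φ₂) : ℂ → ℂ² be a differentiable solution of the linear system ∂φ₁ = (1/2)(−(∂u)φ₁ − λφ₂), ∂φ₂ = (1/2)(−λφ₁ + (∂u)φ₂), ∂̄φ₁ = (1/(2λ)) e^{−u} φ₂, ∂̄φ₂ = (1/(2λ)) e^{u} φ₁. Then ψ = (λφ₂, e^{u/2} φ₁) satisfies the Dirac equation ∂ψ₂ + Uψ₁ = 0, −∂̄ψ₁ + Uψ₂ = 0 with potential U = (1/2) e^{u/2}. -/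

import Mathlib

/-- The Wirtinger derivative `∂f = (1/2)(∂f/∂x − i ∂f/∂y)`. -/
noncomputable def wDeriv (f : ℂ → ℂ) (z : ℂ) : ℂ :=
  (fderiv ℝ f z 1 - Complex.I * fderiv ℝ f z Complex.I) / 2

/-- The Wirtinger derivative `∂̄f = (1/2)(∂f/∂x + i ∂f/∂y)`. -/
noncomputable def wDerivBar (f : ℂ → ℂ) (z : ℂ) : ℂ :=
  (fderiv ℝ f z 1 + Complex.I * fderiv ℝ f z Complex.I) / 2

lemma wDeriv_mul (f g : ℂ → ℂ) (z : ℂ) (hf : DifferentiableAt ℝ f z)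
    (hg : DifferentiableAt ℝ g z) :
    wDeriv (fun w => f w * g w) z = wDeriv f z * g z + f z * wDeriv g z := by
  have h := fderiv_fun_mul hf hg
  simp only [wDeriv, h, ContinuousLinearMap.add_apply, ContinuousLinearMap.smul_apply,
    smul_eq_mul]
  ring

lemma wDeriv_const_mul (c : ℂ) (f : ℂ → ℂ) (z : ℂ) (hf : DifferentiableAt ℝ f z) :
    wDeriv (fun w => c * f w) z = c * wDeriv f z := by
  have h := fderiv_const_mul hf c
  simp only [wDeriv, h, ContinuousLinearMap.smul_apply, smul_eq_mul]
  ring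

lemma wDerivBar_const_mul (c : ℂ) (f : ℂ → ℂ) (z : ℂ) (hf : DifferentiableAt ℝ f z) :
    wDerivBar (fun w => c * f w) z = c * wDerivBar f z := by
  have h := fderiv_const_mul hf c
  simp only [wDerivBar, h, ContinuousLinearMap.smul_apply, smul_eq_mul]
  ring

lemma wDeriv_exp_comp (f : ℂ → ℂ) (z : ℂ) (hf : DifferentiableAt ℝ f z) :
    wDeriv (fun w => Complex.exp (f w)) z = Complex.exp (f z) * wDeriv f z := by
  have he : HasFDerivAt Complex.exp
      (((1 : ℂ →L[ℂ] ℂ).smulRight (Complex.exp (f z))).restrictScalars ℝ) (f z) :=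
    (Complex.hasDerivAt_exp (f z)).hasFDerivAt.restrictScalars ℝ
  have h : fderiv ℝ (fun w => Complex.exp (f w)) z
      = (((1 : ℂ →L[ℂ] ℂ).smulRight (Complex.exp (f z))).restrictScalars ℝ).comp
        (fderiv ℝ f z) := (he.comp z hf.hasFDerivAt).fderiv
  simp only [wDeriv, h, ContinuousLinearMap.coe_comp', Function.comp_apply,
    ContinuousLinearMap.coe_restrictScalars', ContinuousLinearMap.smulRight_apply,
    ContinuousLinearMap.one_apply, smul_eq_mul]
  ring

/-- From the CMC linear system to the Dirac equation: if `φ` solves the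
zero-curvature linear problem of CMC surfaces (with real `u` and `λ ≠ 0`), then
`ψ = (λφ₂, e^{u/2}φ₁)` satisfies the Dirac equation `∂ψ₂ + Uψ₁ = 0`, `−∂̄ψ₁ + Uψ₂ = 0`
with potential `U = (1/2)e^{u/2}`. -/
theorem cmc_linear_system_to_dirac (u : ℂ → ℝ) (lam : ℂ) (φ₁ φ₂ : ℂ → ℂ)
    (hu : ContDiff ℝ (⊤ : ℕ∞) u) (hlam : lam ≠ 0)
    (hφ₁ : Differentiable ℝ φ₁) (hφ₂ : Differentiable ℝ φ₂)
    (hsys₁ : ∀ z : ℂ, wDeriv φ₁ z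
      = (1 / 2) * (-(wDeriv (fun w => ((u w : ℝ) : ℂ)) z) * φ₁ z - lam * φ₂ z))
    (hsys₂ : ∀ z : ℂ, wDeriv φ₂ z
      = (1 / 2) * (-lam * φ₁ z + wDeriv (fun w => ((u w : ℝ) : ℂ)) z * φ₂ z))
    (hsys₃ : ∀ z : ℂ, wDerivBar φ₁ z
      = (1 / (2 * lam)) * Complex.exp (-((u z : ℝ) : ℂ)) * φ₂ z)
    (hsys₄ : ∀ z : ℂ, wDerivBar φ₂ z
      = (1 / (2 * lam)) * Complex.exp (((u z : ℝ) : ℂ)) * φ₁ z) :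
    (∀ z : ℂ,
      wDeriv (fun w => Complex.exp (((u w : ℝ) : ℂ) / 2) * φ₁ w) z
        + ((1 / 2) * Complex.exp (((u z : ℝ) : ℂ) / 2)) * (lam * φ₂ z) = 0)
    ∧ (∀ z : ℂ,
      -(wDerivBar (fun w => lam * φ₂ w) z)
        + ((1 / 2) * Complex.exp (((u z : ℝ) : ℂ) / 2))
          * (Complex.exp (((u z : ℝ) : ℂ) / 2) * φ₁ z) = 0) := by
  have huC : Differentiable ℝ (fun w => ((u w : ℝ) : ℂ)) :=
    Complex.ofRealCLM.differentiable.comp (hu.differentiable (by simp))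
  have huC2 : Differentiable ℝ (fun w => (1 / 2 : ℂ) * ((u w : ℝ) : ℂ)) :=
    huC.const_mul _
  have hE : Differentiable ℝ (fun w => Complex.exp ((1 / 2 : ℂ) * ((u w : ℝ) : ℂ))) :=
    by fun_prop
  have hfun : (fun w => Complex.exp (((u w : ℝ) : ℂ) / 2) * φ₁ w)
      = fun w => Complex.exp ((1 / 2 : ℂ) * ((u w : ℝ) : ℂ)) * φ₁ w := by
    funext w; rw [mul_comm (1 / 2 : ℂ), mul_one_div]
  have harg : ∀ z : ℂ, Complex.exp (((u z : ℝ) : ℂ) / 2)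
      = Complex.exp ((1 / 2 : ℂ) * ((u z : ℝ) : ℂ)) := by
    intro z; rw [mul_comm (1 / 2 : ℂ), mul_one_div]
  constructor
  · intro z
    rw [hfun, harg z, wDeriv_mul _ _ z (hE z) (hφ₁ z),
      wDeriv_exp_comp _ z (huC2 z), wDeriv_const_mul _ _ z (huC z), hsys₁ z]
    ring
  · intro z
    rw [wDerivBar_const_mul _ _ z (hφ₂ z), hsys₄ z]
    have hexp : Complex.exp (((u z : ℝ) : ℂ) / 2) * Complex.exp (((u z : ℝ) : ℂ) / 2)
        = Complex.exp (((u z : ℝ) : ℂ)) := by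
      rw [← Complex.exp_add]; ring_nf
    have h2 : (1 / 2 * Complex.exp (((u z : ℝ) : ℂ) / 2))
        * (Complex.exp (((u z : ℝ) : ℂ) / 2) * φ₁ z)
        = (1 / 2) * Complex.exp (((u z : ℝ) : ℂ)) * φ₁ z := by
      rw [← hexp]; ring
    rw [h2]
    field_simp
    ring
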